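/- arXiv:2303.00353 — 2 statements merged into one kernel-verified Lean document; each statement's English description precedes it below -/
import Mathlib

section
/- Let X be a non-negative random variable. The following are equivalent: (i) there exists C₁ > 0 such that E[exp(X/C₁)] ≤ 2; (ii) there exists C₂ > 0 such that E[X^p]^(1/p) ≤ p·C₂ for all real p with 1 ≤ p < ∞. -/
open MeasureTheory ENNReal Nat

/-- `exp` as a power series. -/
lemma real_exp_eq_tsum (x : ℝ) : Real.exp x = ∑' n : ℕ, x ^ n / n ! := by
  rw [Real.exp_eq_exp_ℝ, NormedSpace.exp_eq_tsum_div]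

/-- `t ^ p ≤ p ^ p * exp t` for `t ≥ 0`, `p ≥ 1`. -/
lemma rpow_le_rpow_mul_exp {t p : ℝ} (ht : 0 ≤ t) (hp : 1 ≤ p) :
    t ^ p ≤ p ^ p * Real.exp t := by
  have hp0 : 0 < p := lt_of_lt_of_le one_pos hp
  rcases eq_or_lt_of_le ht with h | h
  · rw [← h, Real.zero_rpow hp0.ne']
    positivity
  · have hlog : Real.log (t / p) ≤ t / p - 1 := Real.log_le_sub_one_of_pos (by positivity)
    have hlog2 : p * Real.log t ≤ p * Real.log p + t := by
      rw [Real.log_div h.ne' hp0.ne'] at hlog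
      have h4 : p * (Real.log t - Real.log p) ≤ p * (t / p - 1) :=
        mul_le_mul_of_nonneg_left hlog hp0.le
      have h5 : p * (t / p - 1) = t - p := by field_simp
      nlinarith [h4, h5, hp0]
    calc t ^ p = Real.exp (Real.log t * p) := by rw [Real.rpow_def_of_pos h]
      _ ≤ Real.exp (Real.log p * p + t) := by
          apply Real.exp_le_exp.2; nlinarith [hlog2]
      _ = p ^ p * Real.exp t := by
          rw [Real.exp_add, Real.rpow_def_of_pos hp0]

/-- `n ^ n ≤ n ! * exp n`. -/
lemma pow_self_le_factorial_mul_exp (n : ℕ) :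
    (n : ℝ) ^ n ≤ n ! * Real.exp n := by
  have hsum : Summable (fun k : ℕ => (n : ℝ) ^ k / k !) :=
    Real.summable_pow_div_factorial _
  have hterm : (n : ℝ) ^ n / n ! ≤ Real.exp n := by
    rw [real_exp_eq_tsum]
    exact Summable.le_tsum hsum n (fun j _ => by positivity)
  have hfac : (0 : ℝ) < n ! := by exact_mod_cast Nat.factorial_pos n
  rw [div_le_iff₀ hfac] at hterm
  linarith [hterm]

/-- Equivalence between a uniform exponential moment bound and linear growth of
`L^p` norms: for a non-negative random variable `X`,
`∃ C₁ > 0, E[exp(X/C₁)] ≤ 2` iff `∃ C₂ > 0, E[X^p]^(1/p) ≤ p C₂` for all `1 ≤ p < ∞`. -/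
theorem stmt1 {Ω : Type*} [MeasurableSpace Ω] (P : Measure Ω) [IsProbabilityMeasure P]
    (X : Ω → ℝ) (hXm : Measurable X) (hX : ∀ ω, 0 ≤ X ω) :
    (∃ C₁ : ℝ, 0 < C₁ ∧ ∫⁻ ω, ENNReal.ofReal (Real.exp (X ω / C₁)) ∂P ≤ 2) ↔
    (∃ C₂ : ℝ, 0 < C₂ ∧ ∀ p : ℝ, 1 ≤ p →
      (∫⁻ ω, ENNReal.ofReal (X ω ^ p) ∂P) ^ (1 / p) ≤ ENNReal.ofReal (p * C₂)) := by
  constructor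
  · rintro ⟨C₁, hC₁, hint⟩
    refine ⟨2 * C₁, by positivity, fun p hp => ?_⟩
    have hp0 : 0 < p := lt_of_lt_of_le one_pos hp
    -- pointwise bound : X^p ≤ (p*C₁)^p * exp (X/C₁)
    have hpt : ∀ ω, X ω ^ p ≤ (p * C₁) ^ p * Real.exp (X ω / C₁) := by
      intro ω
      have h1 : (X ω / C₁) ^ p ≤ p ^ p * Real.exp (X ω / C₁) :=
        rpow_le_rpow_mul_exp (div_nonneg (hX ω) hC₁.le) hp
      have h2 : X ω ^ p = C₁ ^ p * (X ω / C₁) ^ p := by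
        rw [← Real.mul_rpow hC₁.le (div_nonneg (hX ω) hC₁.le)]
        congr 1
        field_simp
      have h3 : (p * C₁) ^ p = p ^ p * C₁ ^ p :=
        Real.mul_rpow hp0.le hC₁.le
      have hC₁p : (0:ℝ) ≤ C₁ ^ p := by positivity
      calc X ω ^ p = C₁ ^ p * (X ω / C₁) ^ p := h2
        _ ≤ C₁ ^ p * (p ^ p * Real.exp (X ω / C₁)) := by
            exact mul_le_mul_of_nonneg_left h1 hC₁p
        _ = (p * C₁) ^ p * Real.exp (X ω / C₁) := by rw [h3]; ring
    have hbound : (∫⁻ ω, ENNReal.ofReal (X ω ^ p) ∂P)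
        ≤ ENNReal.ofReal ((p * C₁) ^ p) * 2 := by
      calc (∫⁻ ω, ENNReal.ofReal (X ω ^ p) ∂P)
          ≤ ∫⁻ ω, ENNReal.ofReal ((p * C₁) ^ p) * ENNReal.ofReal (Real.exp (X ω / C₁)) ∂P := by
            apply lintegral_mono
            intro ω
            dsimp only
            rw [← ENNReal.ofReal_mul (by positivity)]
            exact ENNReal.ofReal_le_ofReal (hpt ω)
        _ = ENNReal.ofReal ((p * C₁) ^ p) * ∫⁻ ω, ENNReal.ofReal (Real.exp (X ω / C₁)) ∂P := by
            rw [lintegral_const_mul]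
            exact ((hXm.div_const C₁).exp).ennreal_ofReal
        _ ≤ ENNReal.ofReal ((p * C₁) ^ p) * 2 := by
            exact mul_le_mul_right hint _
    have hrpow : (∫⁻ ω, ENNReal.ofReal (X ω ^ p) ∂P) ^ (1 / p)
        ≤ (ENNReal.ofReal ((p * C₁) ^ p) * 2) ^ (1 / p) :=
      ENNReal.rpow_le_rpow hbound (by positivity)
    refine hrpow.trans ?_
    rw [ENNReal.mul_rpow_of_nonneg _ _ (by positivity)]
    have h1 : ENNReal.ofReal ((p * C₁) ^ p) ^ (1 / p) = ENNReal.ofReal (p * C₁) := by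
      rw [← ENNReal.ofReal_rpow_of_nonneg (by positivity) hp0.le,
        ← ENNReal.rpow_mul, mul_one_div_cancel hp0.ne', ENNReal.rpow_one]
    have h2 : (2 : ℝ≥0∞) ^ (1 / p) ≤ 2 := by
      have h3 : (2 : ℝ≥0∞) ^ (1 / p) ≤ (2 : ℝ≥0∞) ^ (1 : ℝ) :=
        ENNReal.rpow_le_rpow_of_exponent_le one_le_two
          (by rw [div_le_one hp0]; exact hp)
      simpa using h3
    rw [h1]
    calc ENNReal.ofReal (p * C₁) * (2:ℝ≥0∞) ^ (1 / p)
        ≤ ENNReal.ofReal (p * C₁) * 2 := mul_le_mul_right h2 _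
      _ = ENNReal.ofReal (p * (2 * C₁)) := by
          rw [← ENNReal.ofReal_ofNat 2, ← ENNReal.ofReal_mul (by positivity)]
          congr 1
          ring
  · rintro ⟨C₂, hC₂, h⟩
    set C₁ : ℝ := 2 * Real.exp 1 * C₂ with hC₁def
    have hC₁ : 0 < C₁ := by positivity
    refine ⟨C₁, hC₁, ?_⟩
    -- expand exp as a series pointwise
    have hpt : ∀ ω, ENNReal.ofReal (Real.exp (X ω / C₁))
        = ∑' n : ℕ, ENNReal.ofReal ((X ω / C₁) ^ n / n !) := by
      intro ω
      rw [real_exp_eq_tsum]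
      exact ENNReal.ofReal_tsum_of_nonneg
        (fun n => div_nonneg (pow_nonneg (div_nonneg (hX ω) hC₁.le) n) (by positivity))
        (Real.summable_pow_div_factorial _)
    have hmeas : ∀ n : ℕ, AEMeasurable
        (fun ω => ENNReal.ofReal ((X ω / C₁) ^ n / n !)) P := by
      intro n
      exact ((((hXm.div_const C₁).pow_const n).div_const _).ennreal_ofReal).aemeasurable
    have hint : ∫⁻ ω, ENNReal.ofReal (Real.exp (X ω / C₁)) ∂P
        = ∑' n : ℕ, ∫⁻ ω, ENNReal.ofReal ((X ω / C₁) ^ n / n !) ∂P := by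
      simp_rw [hpt]
      exact lintegral_tsum hmeas
    rw [hint]
    -- bound each term by ofReal ((1/2)^n)
    have hterm : ∀ n : ℕ, ∫⁻ ω, ENNReal.ofReal ((X ω / C₁) ^ n / n !) ∂P
        ≤ ENNReal.ofReal ((1/2 : ℝ) ^ n) := by
      intro n
      rcases Nat.eq_zero_or_pos n with hn | hn
      · subst hn
        simp
      · have hn1 : (1 : ℝ) ≤ (n : ℝ) := by exact_mod_cast hn
        -- moment bound from hypothesis
        have hmom : (∫⁻ ω, ENNReal.ofReal (X ω ^ n) ∂P)
            ≤ ENNReal.ofReal ((n : ℝ) * C₂) ^ n := by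
          have h1 := h (n : ℝ) hn1
          simp_rw [Real.rpow_natCast] at h1
          have h2 : ((∫⁻ ω, ENNReal.ofReal (X ω ^ n) ∂P) ^ (1 / (n:ℝ))) ^ (n:ℝ)
              ≤ ENNReal.ofReal ((n : ℝ) * C₂) ^ (n:ℝ) :=
            ENNReal.rpow_le_rpow h1 (by positivity)
          rw [← ENNReal.rpow_mul, one_div,
            inv_mul_cancel₀ (by exact_mod_cast hn.ne' : (n:ℝ) ≠ 0),
            ENNReal.rpow_one, ENNReal.rpow_natCast] at h2
          exact h2
        -- compute the term
        have hfac : (0:ℝ) < (n ! : ℝ) := by exact_mod_cast Nat.factorial_pos n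
        have hsplit : ∀ ω, ENNReal.ofReal ((X ω / C₁) ^ n / n !)
            = ENNReal.ofReal (X ω ^ n) * ENNReal.ofReal ((C₁ ^ n * n !)⁻¹) := by
          intro ω
          rw [← ENNReal.ofReal_mul (pow_nonneg (hX ω) n)]
          congr 1
          rw [div_pow, mul_inv]
          ring
        calc ∫⁻ ω, ENNReal.ofReal ((X ω / C₁) ^ n / n !) ∂P
            = (∫⁻ ω, ENNReal.ofReal (X ω ^ n) ∂P) * ENNReal.ofReal ((C₁ ^ n * n !)⁻¹) := by
              simp_rw [hsplit]
              exact lintegral_mul_const _ (hXm.pow_const n).ennreal_ofReal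
          _ ≤ ENNReal.ofReal ((n : ℝ) * C₂) ^ n * ENNReal.ofReal ((C₁ ^ n * n !)⁻¹) :=
              mul_le_mul_left hmom _
          _ = ENNReal.ofReal (((n : ℝ) * C₂) ^ n * (C₁ ^ n * n !)⁻¹) := by
              rw [← ENNReal.ofReal_pow (by positivity), ← ENNReal.ofReal_mul (by positivity)]
          _ ≤ ENNReal.ofReal ((1/2 : ℝ) ^ n) := by
              apply ENNReal.ofReal_le_ofReal
              have hkey : ((n : ℝ) * C₂) ^ n * (C₁ ^ n * n !)⁻¹ ≤ (1/2 : ℝ) ^ n := by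
                have hnn := pow_self_le_factorial_mul_exp n
                have hexp : Real.exp (n : ℝ) = Real.exp 1 ^ n := by
                  rw [← Real.exp_nat_mul]; ring_nf
                rw [hexp] at hnn
                rw [mul_inv_le_iff₀ (by positivity)]
                calc ((n : ℝ) * C₂) ^ n = (n:ℝ) ^ n * C₂ ^ n := by rw [mul_pow]
                  _ ≤ ((n ! : ℝ) * Real.exp 1 ^ n) * C₂ ^ n := by
                      exact mul_le_mul_of_nonneg_right hnn (by positivity)
                  _ = (1/2:ℝ) ^ n * (C₁ ^ n * n !) := by
                      rw [hC₁def, mul_pow, mul_pow, div_pow]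
                      field_simp
                      ring
              exact hkey
    calc ∑' n : ℕ, ∫⁻ ω, ENNReal.ofReal ((X ω / C₁) ^ n / n !) ∂P
        ≤ ∑' n : ℕ, ENNReal.ofReal ((1/2 : ℝ) ^ n) := ENNReal.tsum_le_tsum hterm
      _ = ENNReal.ofReal (∑' n : ℕ, (1/2 : ℝ) ^ n) := by
          rw [ENNReal.ofReal_tsum_of_nonneg (fun n => by positivity) summable_geometric_two]
      _ = 2 := by rw [tsum_geometric_two, ENNReal.ofReal_ofNat]
end

section
/- Let K be a Markov transition kernel on a compact Riemannian manifold M admitting a density k(x,y) with λ ≤ k ≤ Λ for some 0 < λ ≤ Λ. Then K admits an invariant probability measure μ_∞ = ρ dm that is absolutely continuous with respect to the volume measure with density satisfying λ ≤ ρ ≤ Λ. -/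
/-!
Instead of Schauder's theorem we use Doeblin's contraction argument. Write `T` for the transfer
operator `f ↦ ∫ f(x) k(x, ·) dm(x)`. Since `k - λ ≥ 0` has row integrals `1 - λ`, `T` contracts the
`L¹` distance of two functions with the same integral by the factor `1 - λ`; and `|T g| ≤ Λ ‖g‖₁`
pointwise. Hence the iterates `Tⁿ 1` converge geometrically fast at every point, their limit stays
in the set of densities with `λ ≤ ρ ≤ Λ`, and it is a fixed point of `T` by dominated convergence.
Fubini turns `T ρ = ρ` into the invariance of `ρ m`.
-/

open MeasureTheory Filter Topology Function

section

variable {M : Type*} [MeasurableSpace M] {m : Measure M} {k : M → M → ℝ} {C lam : ℝ}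
  {f g : M → ℝ}

/-- The density of `K (f • m)` with respect to `m`. -/
noncomputable def transfer (m : Measure M) (k : M → M → ℝ) (f : M → ℝ) (y : M) : ℝ :=
  ∫ x, f x * k x y ∂m

def boundedDensities (m : Measure M) (lam Lam : ℝ) : Set (M → ℝ) :=
  {f | Measurable f ∧ (∀ x, lam ≤ f x ∧ f x ≤ Lam) ∧ ∫ x, f x ∂m = 1}

theorem integrable_uncurry_mul_kernel {ν : Measure M} [IsFiniteMeasure ν]
    (hk : Measurable (uncurry k)) (hC : ∀ x y, |k x y| ≤ C) (hf : Integrable f m) :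
    Integrable (uncurry fun x y => f x * k x y) (m.prod ν) :=
  (hf.comp_fst ν).mul_bdd hk.aestronglyMeasurable (ae_of_all _ fun p => hC p.1 p.2)

theorem integrable_mul_kernel (hk : Measurable (uncurry k)) (hC : ∀ x y, |k x y| ≤ C)
    (hf : Integrable f m) (y : M) : Integrable (fun x => f x * k x y) m :=
  hf.mul_bdd hk.of_uncurry_right.aestronglyMeasurable (ae_of_all _ fun x => hC x y)

theorem transfer_sub (hk : Measurable (uncurry k)) (hC : ∀ x y, |k x y| ≤ C)
    (hf : Integrable f m) (hg : Integrable g m) :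
    transfer m k (f - g) = transfer m k f - transfer m k g := by
  funext y
  simp only [transfer, Pi.sub_apply, sub_mul]
  exact integral_sub (integrable_mul_kernel hk hC hf y) (integrable_mul_kernel hk hC hg y)

theorem abs_transfer_le (hC : ∀ x y, |k x y| ≤ C) (hf : Integrable f m) (y : M) :
    |transfer m k f y| ≤ C * ∫ x, |f x| ∂m :=
  calc |transfer m k f y| ≤ ∫ x, |f x * k x y| ∂m := abs_integral_le_integral_abs
    _ ≤ ∫ x, C * |f x| ∂m :=
      integral_mono_of_nonneg (ae_of_all _ fun _ => abs_nonneg _) (hf.abs.const_mul C)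
        (ae_of_all _ fun x => by
          dsimp only
          rw [abs_mul, mul_comm]
          exact mul_le_mul_of_nonneg_right (hC x y) (abs_nonneg _))
    _ = C * ∫ x, |f x| ∂m := integral_const_mul C _

theorem measurable_transfer [SFinite m] (hk : Measurable (uncurry k)) (hf : Measurable f) :
    Measurable (transfer m k f) :=
  (((hf.comp measurable_fst).mul hk).stronglyMeasurable.integral_prod_left (μ := m)).measurable

theorem integrable_transfer [IsFiniteMeasure m] (hk : Measurable (uncurry k))
    (hC : ∀ x y, |k x y| ≤ C) (hf : Integrable f m) : Integrable (transfer m k f) m :=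
  (integrable_uncurry_mul_kernel (ν := m) hk hC hf).integral_prod_right

theorem integrable_iterate_transfer [IsFiniteMeasure m] (hk : Measurable (uncurry k))
    (hC : ∀ x y, |k x y| ≤ C) (hf : Integrable f m) (n : ℕ) :
    Integrable ((transfer m k)^[n] f) m := by
  induction n with
  | zero => exact hf
  | succ n ih =>
    rw [iterate_succ_apply']
    exact integrable_transfer hk hC ih

theorem integral_mul_setIntegral_eq_setIntegral_transfer [IsFiniteMeasure m]
    (hk : Measurable (uncurry k)) (hC : ∀ x y, |k x y| ≤ C) (hf : Integrable f m) (A : Set M) :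
    ∫ x, f x * ∫ y in A, k x y ∂m ∂m = ∫ y in A, transfer m k f y ∂m := by
  simp_rw [← integral_const_mul]
  exact integral_integral_swap (integrable_uncurry_mul_kernel hk hC hf)

theorem tendsto_transfer [IsFiniteMeasure m] (hk : Measurable (uncurry k))
    (hC : ∀ x y, |k x y| ≤ C) {F : ℕ → M → ℝ} {B : ℝ}
    (hF : ∀ n, AEStronglyMeasurable (F n) m) (hFB : ∀ n x, |F n x| ≤ B)
    (hlim : ∀ x, Tendsto (fun n => F n x) atTop (𝓝 (f x))) (y : M) :
    Tendsto (fun n => transfer m k (F n) y) atTop (𝓝 (transfer m k f y)) :=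
  tendsto_integral_of_dominated_convergence (fun _ => B * C)
    (fun n => (hF n).mul hk.of_uncurry_right.aestronglyMeasurable) (integrable_const _)
    (fun n => ae_of_all _ fun x => by
      rw [Real.norm_eq_abs, abs_mul]
      exact mul_le_mul (hFB n x) (hC x y) (abs_nonneg _) ((abs_nonneg _).trans (hFB n x)))
    (ae_of_all _ fun x => (hlim x).mul_const _)

theorem mul_integral_le_transfer (hk : Measurable (uncurry k)) (hC : ∀ x y, |k x y| ≤ C)
    (hlam : ∀ x y, lam ≤ k x y) (hf : Integrable f m) (hf0 : ∀ x, 0 ≤ f x) (y : M) :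
    lam * ∫ x, f x ∂m ≤ transfer m k f y := by
  rw [← integral_const_mul]
  refine integral_mono (hf.const_mul lam) (integrable_mul_kernel hk hC hf y) fun x => ?_
  rw [mul_comm]
  exact mul_le_mul_of_nonneg_left (hlam x y) (hf0 x)

theorem abs_transfer_le_transfer_abs_sub (hk : Measurable (uncurry k))
    (hC : ∀ x y, |k x y| ≤ C) (hlam : ∀ x y, lam ≤ k x y) (hg : Integrable g m)
    (hg0 : ∫ x, g x ∂m = 0) (y : M) :
    |transfer m k g y| ≤ transfer m k (fun x => |g x|) y - lam * ∫ x, |g x| ∂m := by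
  have shift : ∀ h : M → ℝ, Integrable h m →
      transfer m k h y - lam * ∫ x, h x ∂m = ∫ x, h x * (k x y - lam) ∂m := fun h hh => by
    simp only [transfer, mul_sub]
    rw [integral_sub (integrable_mul_kernel hk hC hh y) (hh.mul_const lam), integral_mul_const,
      mul_comm]
  calc |transfer m k g y| = |∫ x, g x * (k x y - lam) ∂m| := by
        rw [← shift g hg, hg0, mul_zero, sub_zero]
    _ ≤ ∫ x, |g x * (k x y - lam)| ∂m := abs_integral_le_integral_abs
    _ = ∫ x, |g x| * (k x y - lam) ∂m := by
        simp_rw [abs_mul, abs_of_nonneg (sub_nonneg.2 (hlam _ y))]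
    _ = _ := (shift _ hg.abs).symm

theorem integral_transfer [IsFiniteMeasure m] (hk : Measurable (uncurry k))
    (hC : ∀ x y, |k x y| ≤ C) (hmass : ∀ x, ∫ y, k x y ∂m = 1) (hf : Integrable f m) :
    ∫ y, transfer m k f y ∂m = ∫ x, f x ∂m := by
  simpa [hmass] using (integral_mul_setIntegral_eq_setIntegral_transfer hk hC hf .univ).symm

theorem abs_le_of_mem_boundedDensities {Lam : ℝ} (hf : f ∈ boundedDensities m lam Lam)
    (x : M) : |f x| ≤ max |lam| |Lam| :=
  abs_le_max_abs_abs (hf.2.1 x).1 (hf.2.1 x).2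

theorem integrable_of_mem_boundedDensities [IsFiniteMeasure m] {Lam : ℝ}
    (hf : f ∈ boundedDensities m lam Lam) : Integrable f m :=
  .of_bound hf.1.aestronglyMeasurable _ (ae_of_all _ (abs_le_of_mem_boundedDensities hf))

theorem mem_boundedDensities_of_tendsto [IsFiniteMeasure m] {Lam : ℝ} {F : ℕ → M → ℝ}
    (hF : ∀ n, F n ∈ boundedDensities m lam Lam)
    (hlim : ∀ x, Tendsto (fun n => F n x) atTop (𝓝 (f x))) : f ∈ boundedDensities m lam Lam := by
  refine ⟨measurable_of_tendsto_metrizable (fun n => (hF n).1) (tendsto_pi_nhds.2 hlim),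
    fun x => ⟨ge_of_tendsto' (hlim x) fun n => ((hF n).2.1 x).1,
      le_of_tendsto' (hlim x) fun n => ((hF n).2.1 x).2⟩, ?_⟩
  have hint : Tendsto (fun n => ∫ x, F n x ∂m) atTop (𝓝 (∫ x, f x ∂m)) :=
    tendsto_integral_of_dominated_convergence _ (fun n => (hF n).1.aestronglyMeasurable)
      (integrable_const _) (fun n => ae_of_all _ (abs_le_of_mem_boundedDensities (hF n)))
      (ae_of_all _ hlim)
  simp only [fun n => (hF n).2.2] at hint
  exact tendsto_nhds_unique tendsto_const_nhds hint |>.symm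

theorem transfer_mem_boundedDensities [IsFiniteMeasure m] (hk : Measurable (uncurry k))
    (hC : ∀ x y, |k x y| ≤ C) (hlam : ∀ x y, lam ≤ k x y) (hmass : ∀ x, ∫ y, k x y ∂m = 1)
    (hf : Measurable f) (hfi : Integrable f m) (hf0 : ∀ x, 0 ≤ f x) (hf1 : ∫ x, f x ∂m = 1) :
    transfer m k f ∈ boundedDensities m lam C := by
  refine ⟨measurable_transfer hk hf, fun y => ⟨?_, ?_⟩, ?_⟩
  · simpa [hf1] using mul_integral_le_transfer hk hC hlam hfi hf0 y
  · have := abs_transfer_le hC hfi y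
    simp only [abs_of_nonneg (hf0 _), hf1, mul_one] at this
    exact (le_abs_self _).trans this
  · rw [integral_transfer hk hC hmass hfi, hf1]

theorem mapsTo_transfer_boundedDensities [IsFiniteMeasure m] (hk : Measurable (uncurry k))
    (hC : ∀ x y, |k x y| ≤ C) (hlam0 : 0 ≤ lam) (hlam : ∀ x y, lam ≤ k x y)
    (hmass : ∀ x, ∫ y, k x y ∂m = 1) :
    Set.MapsTo (transfer m k) (boundedDensities m lam C) (boundedDensities m lam C) :=
  fun _ hf => transfer_mem_boundedDensities hk hC hlam hmass hf.1
    (integrable_of_mem_boundedDensities hf) (fun x => hlam0.trans (hf.2.1 x).1) hf.2.2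

section ProbabilityMeasure

variable [IsProbabilityMeasure m]

theorem le_one_of_le_kernel (hlam : ∀ x y, lam ≤ k x y) (hmass : ∀ x, ∫ y, k x y ∂m = 1) :
    lam ≤ 1 := by
  obtain ⟨x⟩ := nonempty_of_isProbabilityMeasure m
  simpa [hmass x] using integral_mono (integrable_const lam)
    (Integrable.of_integral_ne_zero (μ := m) (by simp [hmass x])) (hlam x)

theorem integral_abs_transfer_sub_le (hk : Measurable (uncurry k)) (hC : ∀ x y, |k x y| ≤ C)
    (hlam : ∀ x y, lam ≤ k x y) (hmass : ∀ x, ∫ y, k x y ∂m = 1)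
    (hf : Integrable f m) (hg : Integrable g m) (hfg : ∫ x, f x ∂m = ∫ x, g x ∂m) :
    ∫ y, |transfer m k f y - transfer m k g y| ∂m ≤ (1 - lam) * ∫ x, |f x - g x| ∂m := by
  have hd : Integrable (f - g) m := hf.sub hg
  have hd0 : ∫ x, (f - g) x ∂m = 0 := by
    simp only [Pi.sub_apply]
    rw [integral_sub hf hg, hfg, sub_self]
  calc ∫ y, |transfer m k f y - transfer m k g y| ∂m = ∫ y, |transfer m k (f - g) y| ∂m := by
        rw [transfer_sub hk hC hf hg]
        rfl
    _ ≤ ∫ y, (transfer m k (fun x => |(f - g) x|) y - lam * ∫ x, |(f - g) x| ∂m) ∂m :=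
        integral_mono (integrable_transfer hk hC hd).abs
          ((integrable_transfer hk hC hd.abs).sub (integrable_const _))
          (abs_transfer_le_transfer_abs_sub hk hC hlam hd hd0)
    _ = (1 - lam) * ∫ x, |f x - g x| ∂m := by
        rw [integral_sub (integrable_transfer hk hC hd.abs) (integrable_const _),
          integral_transfer hk hC hmass hd.abs, integral_const]
        simp only [Pi.sub_apply, probReal_univ, one_smul]
        ring

theorem integral_abs_iterate_transfer_sub_le (hk : Measurable (uncurry k))
    (hC : ∀ x y, |k x y| ≤ C) (hlam : ∀ x y, lam ≤ k x y) (hmass : ∀ x, ∫ y, k x y ∂m = 1)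
    (hf : Integrable f m) (hg : Integrable g m) (hfg : ∫ x, f x ∂m = ∫ x, g x ∂m) (n : ℕ) :
    ∫ y, |(transfer m k)^[n] f y - (transfer m k)^[n] g y| ∂m ≤
      (1 - lam) ^ n * ∫ x, |f x - g x| ∂m := by
  induction n generalizing f g with
  | zero => simp
  | succ n ih =>
    calc ∫ y, |(transfer m k)^[n] (transfer m k f) y - (transfer m k)^[n] (transfer m k g) y| ∂m
        ≤ (1 - lam) ^ n * ∫ y, |transfer m k f y - transfer m k g y| ∂m :=
          ih (integrable_transfer hk hC hf) (integrable_transfer hk hC hg)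
            (by rw [integral_transfer hk hC hmass hf, integral_transfer hk hC hmass hg, hfg])
      _ ≤ (1 - lam) ^ n * ((1 - lam) * ∫ x, |f x - g x| ∂m) :=
          mul_le_mul_of_nonneg_left (integral_abs_transfer_sub_le hk hC hlam hmass hf hg hfg)
            (pow_nonneg (sub_nonneg.2 (le_one_of_le_kernel hlam hmass)) n)
      _ = (1 - lam) ^ (n + 1) * ∫ x, |f x - g x| ∂m := by ring

theorem abs_iterate_succ_transfer_sub_le (hk : Measurable (uncurry k))
    (hC : ∀ x y, |k x y| ≤ C) (hlam : ∀ x y, lam ≤ k x y) (hmass : ∀ x, ∫ y, k x y ∂m = 1)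
    (hf : Integrable f m) (hg : Integrable g m) (hfg : ∫ x, f x ∂m = ∫ x, g x ∂m) (n : ℕ)
    (y : M) :
    |(transfer m k)^[n + 1] f y - (transfer m k)^[n + 1] g y| ≤
      C * (∫ x, |f x - g x| ∂m) * (1 - lam) ^ n := by
  obtain ⟨x⟩ := nonempty_of_isProbabilityMeasure m
  have hiter {h : M → ℝ} (hh : Integrable h m) := integrable_iterate_transfer hk hC hh n
  rw [iterate_succ_apply', iterate_succ_apply', ← Pi.sub_apply,
    ← transfer_sub hk hC (hiter hf) (hiter hg)]
  calc _ ≤ C * ∫ y, |((transfer m k)^[n] f - (transfer m k)^[n] g) y| ∂m :=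
        abs_transfer_le hC ((hiter hf).sub (hiter hg)) y
    _ ≤ C * ((1 - lam) ^ n * ∫ x, |f x - g x| ∂m) :=
        mul_le_mul_of_nonneg_left
          (integral_abs_iterate_transfer_sub_le hk hC hlam hmass hf hg hfg n)
          ((abs_nonneg _).trans (hC x x))
    _ = _ := by ring

theorem exists_mem_boundedDensities_transfer_eq_self (hk : Measurable (uncurry k))
    (hC : ∀ x y, |k x y| ≤ C) (hlam0 : 0 < lam) (hlam : ∀ x y, lam ≤ k x y)
    (hmass : ∀ x, ∫ y, k x y ∂m = 1) :
    ∃ ρ ∈ boundedDensities m lam C, transfer m k ρ = ρ := by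
  set T := transfer m k
  have hone : Integrable (fun _ : M => (1 : ℝ)) m := integrable_const 1
  have hT1 : T 1 ∈ boundedDensities m lam C :=
    transfer_mem_boundedDensities hk hC hlam hmass measurable_const hone (fun _ => zero_le_one)
      (by simp)
  have hu : ∀ n, T^[n] (T 1) ∈ boundedDensities m lam C := fun n =>
    (mapsTo_transfer_boundedDensities hk hC hlam0.le hlam hmass).iterate n hT1
  have hcauchy : ∀ y, CauchySeq fun n => T^[n] (T 1) y := fun y =>
    cauchySeq_of_le_geometric (1 - lam) _ (by linarith) fun n => by
      rw [Real.dist_eq]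
      exact abs_iterate_succ_transfer_sub_le hk hC hlam hmass hone
        (integrable_of_mem_boundedDensities hT1) (integral_transfer hk hC hmass hone).symm n y
  choose ρ hρ using fun y => cauchySeq_tendsto_of_complete (hcauchy y)
  refine ⟨ρ, mem_boundedDensities_of_tendsto hu hρ, funext fun y => ?_⟩
  refine tendsto_nhds_unique (tendsto_transfer hk hC (fun n => (hu n).1.aestronglyMeasurable)
    (fun n => abs_le_of_mem_boundedDensities (hu n)) hρ y) ?_
  have hshift := (tendsto_add_atTop_iff_nat 1).2 (hρ y)
  simp only [iterate_succ_apply'] at hshift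
  exact hshift

end ProbabilityMeasure

end

theorem stmt12_general {M : Type*} [MeasurableSpace M] (m : Measure M) [IsProbabilityMeasure m]
    (k : M → M → ℝ) (lam Lam : ℝ) (hlam : 0 < lam)
    (hk : Measurable (Function.uncurry k))
    (hbound : ∀ x y, lam ≤ k x y ∧ k x y ≤ Lam)
    (hmass : ∀ x, ∫ y, k x y ∂m = 1) :
    ∃ ρ : M → ℝ, Measurable ρ ∧ (∀ x, lam ≤ ρ x ∧ ρ x ≤ Lam) ∧ (∫ x, ρ x ∂m = 1) ∧
      ∀ A : Set M, MeasurableSet A →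
        ∫ x, ρ x * ∫ y in A, k x y ∂m ∂m = ∫ y in A, ρ y ∂m := by
  have hC : ∀ x y, |k x y| ≤ Lam := fun x y =>
    abs_le.2 ⟨by linarith [hbound x y], (hbound x y).2⟩
  obtain ⟨ρ, hρ, hfix⟩ := exists_mem_boundedDensities_transfer_eq_self hk hC hlam
    (fun x y => (hbound x y).1) hmass
  refine ⟨ρ, hρ.1, hρ.2.1, hρ.2.2, fun A _ => ?_⟩
  rw [integral_mul_setIntegral_eq_setIntegral_transfer hk hC
    (integrable_of_mem_boundedDensities hρ) A, hfix]

/-- Existence of an absolutely continuous invariant measure for a Markov kernel with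
two-sided bounded density: if `K(x,A) = ∫_A k(x,y) dm(y)` with `0 < λ ≤ k ≤ Λ`, then
there is an invariant probability measure `μ_∞ = ρ dm` with `λ ≤ ρ ≤ Λ`. -/
theorem stmt12 {M : Type*} [MeasurableSpace M] (m : Measure M) [IsProbabilityMeasure m]
    (k : M → M → ℝ) (lam Lam : ℝ) (hlam : 0 < lam) (hlamLam : lam ≤ Lam)
    (hk : Measurable (Function.uncurry k))
    (hbound : ∀ x y, lam ≤ k x y ∧ k x y ≤ Lam)
    (hmass : ∀ x, ∫ y, k x y ∂m = 1) :
    ∃ ρ : M → ℝ, Measurable ρ ∧ (∀ x, lam ≤ ρ x ∧ ρ x ≤ Lam) ∧ (∫ x, ρ x ∂m = 1) ∧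
      ∀ A : Set M, MeasurableSet A →
        ∫ x, ρ x * ∫ y in A, k x y ∂m ∂m = ∫ y in A, ρ y ∂m :=
  stmt12_general m k lam Lam hlam hk hbound hmass
end
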